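/- For every integer n ≥ 1: (1) a_{1,2}(4n) = b_{1,2}(4n); (2) a_{2,1}(4n) = c_{1,1}(4n); (3) a_{2,2}(4n) = a_{1,2}(4n+1) = c_{1,2}(4n) = b_{2,2}(4n); (4) a_{1,1}(4n+1) = b_{1,1}(4n+1) = b_{2,1}(4n); (5) a_{2,1}(4n+1) = a_{1,1}(4n+2) = c_{1,1}(4n+1) = b_{2,1}(4n+1); (6) a_{2,2}(4n+1) = c_{1,2}(4n+1) = c_{2,2}(4n); (7) a_{1,2}(4n+2) = b_{1,2}(4n+2) = b_{2,2}(4n+1); (8) a_{2,1}(4n+2) = c_{1,1}(4n+2) = c_{2,1}(4n+1); (9) a_{2,2}(4n+2) = a_{1,2}(4n+3) = c_{1,2}(4n+2) = b_{2,2}(4n+2); (10) a_{1,1}(4n+3) = b_{1,1}(4n+3) = b_{2,1}(4n+2); (11) a_{2,1}(4n+3) = c_{1,1}(4n+3) = b_{2,1}(4n+3); (12) a_{2,2}(4n+3) = c_{1,2}(4n+3) = c_{2,2}(4n+2). -/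

import Mathlib

/-- The 16-letter alphabet 𝒜 = {A,…,P}. -/
inductive A16 : Type
  | A | B | C | D | E | F | G | H | I | J | K | L | M | N | O | P
  deriving DecidableEq

/-- The 2×2 block substitution μ on 𝒜 (rows top to bottom). -/
def mu : A16 → Fin 2 → Fin 2 → A16
  | .A => ![![.A, .F], ![.G, .C]]
  | .B => ![![.A, .F], ![.H, .D]]
  | .C => ![![.B, .E], ![.G, .C]]
  | .D => ![![.B, .E], ![.H, .D]]
  | .E => ![![.A, .N], ![.G, .K]]
  | .F => ![![.A, .N], ![.H, .L]]
  | .G => ![![.B, .M], ![.G, .K]]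
  | .H => ![![.B, .M], ![.H, .L]]
  | .I => ![![.I, .F], ![.O, .C]]
  | .J => ![![.I, .F], ![.P, .D]]
  | .K => ![![.J, .E], ![.O, .C]]
  | .L => ![![.J, .E], ![.P, .D]]
  | .M => ![![.I, .N], ![.O, .K]]
  | .N => ![![.I, .N], ![.P, .L]]
  | .O => ![![.J, .M], ![.O, .K]]
  | .P => ![![.J, .M], ![.P, .L]]

/-- Entry version of μ, indexed by arbitrary naturals (via mod 2). -/
def muE (x : A16) (r c : ℕ) : A16 :=
  mu x ⟨r % 2, by omega⟩ ⟨c % 2, by omega⟩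

/-- `superE n x` is the supertile μⁿ(x), a 2ⁿ×2ⁿ array over 𝒜,
given as a total function on ℕ × ℕ (only indices < 2ⁿ are relevant). -/
def superE : ℕ → A16 → ℕ → ℕ → A16
  | 0, x, _, _ => x
  | n + 1, x, r, c => muE (superE n x (r / 2) (c / 2)) r c

/-- The supertile T_k = μᵏ(N). -/
def Tfun (k : ℕ) : ℕ → ℕ → A16 := superE k .N

/-- An m×n pattern over the alphabet α. -/
abbrev Pat (α : Type) (m n : ℕ) := Fin m → Fin n → α

/-- The set of m×n patterns occurring in the size×size array X. -/
def patIn {α : Type} (X : ℕ → ℕ → α) (size m n : ℕ) : Set (Pat α m n) :=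
  { p | ∃ r c : ℕ, r + m ≤ size ∧ c + n ≤ size ∧
      ∀ (i : Fin m) (j : Fin n), p i j = X (r + i) (c + j) }

/-- P(T, m×n) = ⋃ₖ P(T_k, m×n). -/
def PT (m n : ℕ) : Set (Pat A16 m n) := ⋃ k : ℕ, patIn (Tfun k) (2 ^ k) m n

/-- μ applied to an m×n pattern, as a total 2m×2n array on ℕ × ℕ
(indices are reduced mod the valid range; in range this is exactly μ(p)). -/
def muPatE {m n : ℕ} (p : Pat A16 m n) (r c : ℕ) : A16 :=
  if hm : 0 < m then
    if hn : 0 < n then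
      muE (p ⟨r / 2 % m, Nat.mod_lt _ hm⟩ ⟨c / 2 % n, Nat.mod_lt _ hn⟩) r c
    else .A
  else .A

/-- μ² applied to an m×n pattern, as a total 4m×4n array on ℕ × ℕ. -/
def mu2PatE {m n : ℕ} (p : Pat A16 m n) (r c : ℕ) : A16 :=
  muE (muPatE p (r / 2) (c / 2)) r c

/-- P_{i,j}(T, m×n) = { μ(x)[i,j,m×n] : x ∈ P(T,m×n) } (1-based corner (i,j)). -/
def Pij (i j m n : ℕ) : Set (Pat A16 m n) :=
  { q | ∃ x ∈ PT m n, ∀ (a : Fin m) (b : Fin n),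
      q a b = muPatE x (i - 1 + a) (j - 1 + b) }

/-- Q_{i,j}(T, m×n) = { μ²(x)[i,j,m×n] : x ∈ P(T,m×n) } (1-based corner (i,j)). -/
def Qij (i j m n : ℕ) : Set (Pat A16 m n) :=
  { q | ∃ x ∈ PT m n, ∀ (a : Fin m) (b : Fin n),
      q a b = mu2PatE x (i - 1 + a) (j - 1 + b) }

/-- The 2×2 block substitution φ from 𝒜 to ℬ = {0,1,2,3}. -/
def phi : A16 → Fin 2 → Fin 2 → Fin 4
  | .A => ![![0, 1], ![0, 0]]
  | .B => ![![0, 1], ![1, 1]]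
  | .C => ![![1, 0], ![0, 0]]
  | .D => ![![1, 0], ![1, 1]]
  | .E => ![![0, 3], ![0, 2]]
  | .F => ![![0, 3], ![1, 3]]
  | .G => ![![1, 2], ![0, 2]]
  | .H => ![![1, 2], ![1, 3]]
  | .I => ![![2, 1], ![2, 0]]
  | .J => ![![2, 1], ![3, 1]]
  | .K => ![![3, 0], ![2, 0]]
  | .L => ![![3, 0], ![3, 1]]
  | .M => ![![2, 3], ![2, 2]]
  | .N => ![![2, 3], ![3, 3]]
  | .O => ![![3, 2], ![2, 2]]
  | .P => ![![3, 2], ![3, 3]]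

/-- Entry version of φ, indexed by arbitrary naturals (via mod 2). -/
def phiE (x : A16) (r c : ℕ) : Fin 4 :=
  phi x ⟨r % 2, by omega⟩ ⟨c % 2, by omega⟩

/-- φ applied to an m×n pattern over 𝒜, as a total 2m×2n array on ℕ × ℕ. -/
def phiPatE {m n : ℕ} (p : Pat A16 m n) (r c : ℕ) : Fin 4 :=
  if hm : 0 < m then
    if hn : 0 < n then
      phiE (p ⟨r / 2 % m, Nat.mod_lt _ hm⟩ ⟨c / 2 % n, Nat.mod_lt _ hn⟩) r c
    else 0
  else 0

/-- φ(T_k), a 2^(k+1)×2^(k+1) array over ℬ. -/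
def Sfun (k : ℕ) (r c : ℕ) : Fin 4 := phiE (Tfun k (r / 2) (c / 2)) r c

/-- P(S, m×n) = ⋃_{k≥1} P(φ(T_{k-1}), m×n). -/
def PS (m n : ℕ) : Set (Pat (Fin 4) m n) :=
  ⋃ k : ℕ, patIn (Sfun k) (2 ^ (k + 1)) m n

/-- P_{i,j}(S, m×n) = { φ(x)[i,j,m×n] : x ∈ P(T,m×n) } (1-based corner (i,j)). -/
def PSij (i j m n : ℕ) : Set (Pat (Fin 4) m n) :=
  { q | ∃ x ∈ PT m n, ∀ (a : Fin m) (b : Fin n),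
      q a b = phiPatE x (i - 1 + a) (j - 1 + b) }

/-- A_n = |P(S, n×n)|. -/
noncomputable def Acnt (n : ℕ) : ℕ := Nat.card (PS n n)

/-- a_{i,j}(n) = |P_{i,j}(T, n×n)|. -/
noncomputable def aT (i j n : ℕ) : ℕ := Nat.card (Pij i j n n)

/-- b_{i,j}(n) = |P_{i,j}(T, n×(n+1))|. -/
noncomputable def bT (i j n : ℕ) : ℕ := Nat.card (Pij i j n (n + 1))

/-- c_{i,j}(n) = |P_{i,j}(T, (n+1)×n)|. -/
noncomputable def cT (i j n : ℕ) : ℕ := Nat.card (Pij i j (n + 1) n)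

/-!
The window `μ(x)[i,j,m×n]` only reads the top-left `⌈(i-1+m)/2⌉ × ⌈(j-1+n)/2⌉` corner `y` of `x`,
and every pattern of `T` extends to larger ones, so `P_{i,j}(T, m×n)` is the set of windows of
`μ(y)` for `y` ranging over patterns of `T` of that size. Two such counts therefore agree when,
for patterns of `T`, the smaller window determines the larger one, which adds a right column or
a top row. This is a local recognizability property of `μ`: it is injective, and among the
letters that can stand next to a given letter in `T` (a `μ`-closed set of dominoes) a single
letter of the `μ`-image determines the neighbour.
-/

instance : Fintype A16 :=
  ⟨⟨{.A, .B, .C, .D, .E, .F, .G, .H, .I, .J, .K, .L, .M, .N, .O, .P}, by decide⟩,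
    fun x => by cases x <;> decide⟩

instance : Inhabited A16 := ⟨.A⟩

-- A `μ`-closed set of dominoes containing those of `T` (`admissible_Tfun`): `b ∈ rightNbrs a`
-- (resp. `lowerNbrs a`) allows `b` to stand right of (resp. below) `a`.
def rightNbrs : A16 → List A16
  | .A | .I => [.F, .N]
  | .B | .J => [.E, .M]
  | .C | .D | .K | .L => [.G, .H, .O, .P]
  | .E | .M => [.B, .J]
  | .F | .N => [.A, .I]
  | .G | .O => [.C, .K]
  | .H | .P => [.D, .L]

def lowerNbrs : A16 → List A16
  | .A | .B => [.G, .H]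
  | .C | .D => [.M, .N]
  | .E | .F => [.C, .D]
  | .G | .H => [.A, .B, .I]
  | .I | .J => [.O, .P]
  | .K | .L => [.E, .F]
  | .M | .N => [.K, .L]
  | .O | .P => [.A, .I, .J]

theorem mu_injective : Function.Injective mu := by decide

theorem mu_mem_rightNbrs_mu (x : A16) (i : Fin 2) : mu x i 1 ∈ rightNbrs (mu x i 0) := by
  revert x i; decide

theorem mu_mem_rightNbrs_mu_of_mem {a b : A16} (h : b ∈ rightNbrs a) (i : Fin 2) :
    mu b i 0 ∈ rightNbrs (mu a i 1) := by
  revert a b i; decide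

theorem mu_mem_lowerNbrs_mu (x : A16) (j : Fin 2) : mu x 1 j ∈ lowerNbrs (mu x 0 j) := by
  revert x j; decide

theorem mu_mem_lowerNbrs_mu_of_mem {a b : A16} (h : b ∈ lowerNbrs a) (j : Fin 2) :
    mu b 0 j ∈ lowerNbrs (mu a 1 j) := by
  revert a b j; decide

theorem eq_of_mem_rightNbrs {a b b' : A16} (hb : b ∈ rightNbrs a) (hb' : b' ∈ rightNbrs a)
    (h : mu b 1 0 = mu b' 1 0) : b = b' := by
  revert a b b'; decide

theorem eq_of_mem_lowerNbrs {a a' b : A16} (ha : b ∈ lowerNbrs a) (ha' : b ∈ lowerNbrs a')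
    (h : mu a 1 0 = mu a' 1 0) : a = a' := by
  revert a a' b; decide

theorem mu_zero_one_eq_of_mem_lowerNbrs {a b b' : A16} (hb : b ∈ lowerNbrs a)
    (hb' : b' ∈ lowerNbrs a) (h : mu b 0 0 = mu b' 0 0) : mu b 0 1 = mu b' 0 1 := by
  revert a b b'; decide

theorem mu_zero_one_eq_of_mem_rightNbrs {a a' b : A16} (ha : b ∈ rightNbrs a)
    (ha' : b ∈ rightNbrs a') (h : mu a 1 1 = mu a' 1 1) : mu a 0 1 = mu a' 0 1 := by
  revert a a' b; decide

def muArr (Y : ℕ → ℕ → A16) (r c : ℕ) : A16 := muE (Y (r / 2) (c / 2)) r c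

theorem muArr_two_mul_add (Y : ℕ → ℕ → A16) (s t : ℕ) (i j : Fin 2) :
    muArr Y (2 * s + i) (2 * t + j) = mu (Y s t) i j := by
  have hi := i.isLt
  have hj := j.isLt
  simp only [muArr, muE]
  congr <;> omega

theorem Tfun_succ (k : ℕ) : Tfun (k + 1) = muArr (Tfun k) := rfl

structure Admissible (Y : ℕ → ℕ → A16) (h w : ℕ) : Prop where
  right : ∀ s t, s < h → t + 1 < w → Y s (t + 1) ∈ rightNbrs (Y s t)
  lower : ∀ s t, s + 1 < h → t < w → Y (s + 1) t ∈ lowerNbrs (Y s t)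

theorem exists_two_mul_add_fin (r : ℕ) : ∃ s, ∃ i : Fin 2, r = 2 * s + i :=
  ⟨r / 2, ⟨r % 2, Nat.mod_lt _ two_pos⟩, (Nat.div_add_mod r 2).symm⟩

theorem Admissible.muArr {Y : ℕ → ℕ → A16} {h w : ℕ} (hY : Admissible Y h w) :
    Admissible (muArr Y) (2 * h) (2 * w) where
  right r c hr hc := by
    obtain ⟨s, i, rfl⟩ := exists_two_mul_add_fin r
    rcases Nat.even_or_odd' c with ⟨t, rfl | rfl⟩
    · have := mu_mem_rightNbrs_mu (Y s t) i
      rwa [← muArr_two_mul_add, ← muArr_two_mul_add] at this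
    · have := mu_mem_rightNbrs_mu_of_mem (hY.right s t (by omega) (by omega)) i
      rwa [← muArr_two_mul_add, ← muArr_two_mul_add] at this
  lower r c hr hc := by
    obtain ⟨t, j, rfl⟩ := exists_two_mul_add_fin c
    rcases Nat.even_or_odd' r with ⟨s, rfl | rfl⟩
    · have := mu_mem_lowerNbrs_mu (Y s t) j
      rwa [← muArr_two_mul_add, ← muArr_two_mul_add] at this
    · have := mu_mem_lowerNbrs_mu_of_mem (hY.lower s t (by omega) (by omega)) j
      rwa [← muArr_two_mul_add, ← muArr_two_mul_add] at this

theorem admissible_Tfun (k : ℕ) : Admissible (Tfun k) (2 ^ k) (2 ^ k) := by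
  induction k with
  | zero => exact ⟨fun _ _ _ h => by omega, fun _ _ h _ => by omega⟩
  | succ k ih => rw [Tfun_succ, pow_succ']; exact ih.muArr

def EqOnBox {α : Type*} (X X' : ℕ → ℕ → α) (r₀ r₁ c₀ c₁ : ℕ) : Prop :=
  ∀ r c, r₀ ≤ r → r < r₁ → c₀ ≤ c → c < c₁ → X r c = X' r c

theorem EqOnBox.mono {α : Type*} {X X' : ℕ → ℕ → α} {r₀ r₁ c₀ c₁ r₀' r₁' c₀' c₁' : ℕ}
    (H : EqOnBox X X' r₀ r₁ c₀ c₁) (h₀ : r₀ ≤ r₀') (h₁ : r₁' ≤ r₁) (h₂ : c₀ ≤ c₀')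
    (h₃ : c₁' ≤ c₁) : EqOnBox X X' r₀' r₁' c₀' c₁' :=
  fun r c hr₀ hr₁ hc₀ hc₁ => H r c (by omega) (by omega) (by omega) (by omega)

section Recognition

variable {Y Y' : ℕ → ℕ → A16} {h w r₀ r₁ c₀ c₁ : ℕ}

theorem EqOnBox.mu_eq (H : EqOnBox (muArr Y) (muArr Y') r₀ r₁ c₀ c₁) {s t : ℕ} (i j : Fin 2)
    (h₀ : r₀ ≤ 2 * s + i) (h₁ : 2 * s + i < r₁) (h₂ : c₀ ≤ 2 * t + j) (h₃ : 2 * t + j < c₁) :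
    mu (Y s t) i j = mu (Y' s t) i j := by
  rw [← muArr_two_mul_add, ← muArr_two_mul_add]
  exact H _ _ h₀ h₁ h₂ h₃

theorem EqOnBox.eq_of_block (H : EqOnBox (muArr Y) (muArr Y') r₀ r₁ c₀ c₁) {s t : ℕ}
    (h₀ : r₀ ≤ 2 * s) (h₁ : 2 * s + 2 ≤ r₁) (h₂ : c₀ ≤ 2 * t) (h₃ : 2 * t + 2 ≤ c₁) :
    Y s t = Y' s t :=
  mu_injective <| funext₂ fun i j => H.mu_eq i j (by omega) (by omega) (by omega) (by omega)

theorem muArr_eq_of_mu_eq {s t : ℕ} (i j : Fin 2) (h : mu (Y s t) i j = mu (Y' s t) i j) :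
    muArr Y (2 * s + i) (2 * t + j) = muArr Y' (2 * s + i) (2 * t + j) := by
  rw [muArr_two_mul_add, muArr_two_mul_add, h]

theorem EqOnBox.muArr_add_col {t : ℕ} (hY : Admissible Y h w) (hY' : Admissible Y' h w)
    (hr₀ : r₀ ≤ 1) (hr : r₀ + 3 ≤ r₁) (hrh : r₁ ≤ 2 * h) (hc : c₀ + 2 ≤ 2 * t) (htw : t < w)
    (H : EqOnBox (muArr Y) (muArr Y') r₀ r₁ c₀ (2 * t + 1)) :
    EqOnBox (muArr Y) (muArr Y') r₀ r₁ c₀ (2 * t + 2) := by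
  obtain ⟨u, rfl⟩ : ∃ u, t = u + 1 := ⟨t - 1, by omega⟩
  have hlast : ∀ s, Y s u = Y' s u → r₀ ≤ 2 * s + 1 → 2 * s + 1 < r₁ →
      Y s (u + 1) = Y' s (u + 1) := by
    intro s hsu h₀ h₁
    refine eq_of_mem_rightNbrs (hY.right s u (by omega) (by omega)) ?_
      (H.mu_eq 1 0 h₀ h₁ (by omega) (by omega))
    rw [hsu]
    exact hY'.right s u (by omega) (by omega)
  have hfull : ∀ s, r₀ ≤ 2 * s → 2 * s + 2 ≤ r₁ → Y s (u + 1) = Y' s (u + 1) := fun s h₀ h₁ =>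
    hlast s (H.eq_of_block h₀ h₁ (by omega) (by omega)) (by omega) (by omega)
  intro r c h₀ h₁ h₂ h₃
  rcases Nat.lt_or_ge c (2 * (u + 1) + 1) with hc' | hc'
  · exact H r c h₀ h₁ h₂ hc'
  obtain rfl : c = 2 * (u + 1) + 1 := by omega
  rcases Nat.even_or_odd' r with ⟨s, rfl | rfl⟩
  · refine muArr_eq_of_mu_eq 0 1 ?_
    by_cases hs : 2 * s + 2 ≤ r₁
    · rw [hfull s (by omega) hs]
    -- the last row of the window is the upper half of block row `s`
    obtain ⟨p, rfl⟩ : ∃ p, s = p + 1 := ⟨s - 1, by omega⟩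
    refine mu_zero_one_eq_of_mem_lowerNbrs (hY.lower p (u + 1) (by omega) (by omega)) ?_
      (H.mu_eq 0 0 (by omega) (by omega) (by omega) (by omega))
    rw [hfull p (by omega) (by omega)]
    exact hY'.lower p (u + 1) (by omega) (by omega)
  · refine muArr_eq_of_mu_eq 1 1 ?_
    by_cases hs : r₀ ≤ 2 * s
    · rw [hfull s hs (by omega)]
    -- the first row of the window is the lower half of block row `0`
    obtain rfl : s = 0 := by omega
    have h1u : Y 1 u = Y' 1 u := H.eq_of_block (by omega) (by omega) (by omega) (by omega)
    have h0u : Y 0 u = Y' 0 u := by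
      refine eq_of_mem_lowerNbrs (hY.lower 0 u (by omega) (by omega)) ?_
        (H.mu_eq 1 0 (by omega) (by omega) (by omega) (by omega))
      rw [h1u]
      exact hY'.lower 0 u (by omega) (by omega)
    rw [hlast 0 h0u (by omega) (by omega)]

theorem EqOnBox.muArr_add_row (hY : Admissible Y h w) (hY' : Admissible Y' h w)
    (hr : 4 ≤ r₁) (hrh : r₁ ≤ 2 * h) (hc₀ : c₀ ≤ 1) (hc : c₀ + 3 ≤ c₁) (hcw : c₁ ≤ 2 * w)
    (H : EqOnBox (muArr Y) (muArr Y') 1 r₁ c₀ c₁) :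
    EqOnBox (muArr Y) (muArr Y') 0 r₁ c₀ c₁ := by
  have htop : ∀ t, c₀ ≤ 2 * t → 2 * t + 2 ≤ c₁ → Y 0 t = Y' 0 t := by
    intro t h₂ h₃
    have h1t : Y 1 t = Y' 1 t := H.eq_of_block (by omega) (by omega) h₂ h₃
    refine eq_of_mem_lowerNbrs (hY.lower 0 t (by omega) (by omega)) ?_
      (H.mu_eq 1 0 (by omega) (by omega) (by omega) (by omega))
    rw [h1t]
    exact hY'.lower 0 t (by omega) (by omega)
  intro r c h₀ h₁ h₂ h₃
  rcases Nat.eq_zero_or_pos r with rfl | hr'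
  swap
  · exact H r c hr' h₁ h₂ h₃
  rcases Nat.even_or_odd' c with ⟨t, rfl | rfl⟩
  · refine muArr_eq_of_mu_eq (s := 0) 0 0 ?_
    by_cases ht : 2 * t + 2 ≤ c₁
    · rw [htop t h₂ ht]
    -- the last column of the window is the left half of block column `t`
    obtain ⟨u, rfl⟩ : ∃ u, t = u + 1 := ⟨t - 1, by omega⟩
    have h0u := htop u (by omega) (by omega)
    refine congrArg (mu · 0 0) (eq_of_mem_rightNbrs (hY.right 0 u (by omega) (by omega)) ?_
      (H.mu_eq 1 0 (by omega) (by omega) (by omega) (by omega)))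
    rw [h0u]
    exact hY'.right 0 u (by omega) (by omega)
  · refine muArr_eq_of_mu_eq (s := 0) 0 1 ?_
    by_cases ht : c₀ ≤ 2 * t
    · rw [htop t ht (by omega)]
    -- the first column of the window is the right half of block column `0`
    obtain rfl : t = 0 := by omega
    refine mu_zero_one_eq_of_mem_rightNbrs (hY.right 0 0 (by omega) (by omega)) ?_
      (H.mu_eq 1 1 (by omega) (by omega) (by omega) (by omega))
    rw [htop 1 (by omega) (by omega)]
    exact hY'.right 0 0 (by omega) (by omega)

end Recognition

theorem superE_add (x : A16) (j k r c : ℕ) :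
    superE (j + k) x r c =
      superE k (superE j x (r / 2 ^ k) (c / 2 ^ k)) (r % 2 ^ k) (c % 2 ^ k) := by
  induction k generalizing r c with
  | zero => simp [superE]
  | succ k ih =>
    have hdiv (n : ℕ) : n / 2 / 2 ^ k = n / 2 ^ (k + 1) := by
      rw [Nat.div_div_eq_div_mul, pow_succ']
    have hmod (n : ℕ) : n % 2 ^ (k + 1) / 2 = n / 2 % 2 ^ k := by
      rw [pow_succ', Nat.mod_mul_right_div_self]
    have hmod₂ (n : ℕ) : n % 2 ^ (k + 1) % 2 = n % 2 :=
      Nat.mod_mod_of_dvd n (dvd_pow_self 2 k.succ_ne_zero)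
    show muE (superE (j + k) x (r / 2) (c / 2)) r c =
      muE (superE k _ (r % 2 ^ (k + 1) / 2) (c % 2 ^ (k + 1) / 2))
        (r % 2 ^ (k + 1)) (c % 2 ^ (k + 1))
    rw [ih, hdiv, hdiv, hmod, hmod]
    simp only [muE, hmod₂]

-- `μ³(N)` has `N` at position `(0, 3)`, so `T_k` reappears in `T_{k+3}` shifted by `3·2^k`
-- columns.
theorem Tfun_add_three {k r c : ℕ} (hr : r < 2 ^ k) (hc : c < 2 ^ k) :
    Tfun (k + 3) r (c + 3 * 2 ^ k) = Tfun k r c := by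
  have hN : superE 3 .N 0 3 = .N := by decide
  rw [Tfun, Tfun, add_comm, superE_add, Nat.div_eq_of_lt hr, Nat.mod_eq_of_lt hr,
    Nat.add_mul_div_right _ _ (by positivity), Nat.div_eq_of_lt hc, Nat.add_mul_mod_self_right,
    Nat.mod_eq_of_lt hc, zero_add, hN]

theorem mem_PT_iff {h w : ℕ} {y : Pat A16 h w} :
    y ∈ PT h w ↔ ∃ k r c, r + h ≤ 2 ^ k ∧ c + w ≤ 2 ^ k ∧
      ∀ a b, y a b = Tfun k (r + a) (c + b) := by
  simp only [PT, patIn, Set.mem_iUnion, Set.mem_ofPred_eq]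

theorem exists_occurrence_with_margin {h w : ℕ} {y : Pat A16 h w} (hy : y ∈ PT h w) (s : ℕ) :
    ∃ k r c, r + h + s ≤ 2 ^ k ∧ c + w + s ≤ 2 ^ k ∧
      ∀ a b, y a b = Tfun k (r + a) (c + b) := by
  obtain ⟨k, r, c, hr, hc, hyk⟩ := mem_PT_iff.1 hy
  have shift : ∀ k c, r + h ≤ 2 ^ k → c + w ≤ 2 ^ k → (∀ a b, y a b = Tfun k (r + a) (c + b)) →
      ∀ a b, y a b = Tfun (k + 3) (r + a) (c + 3 * 2 ^ k + b) := by
    intro k c hr hc hyk a b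
    rw [hyk, add_right_comm, Tfun_add_three (by omega) (by omega)]
  have persist : ∀ n, ∃ c', c' + w ≤ 2 ^ (k + 3 * n) ∧
      ∀ a b, y a b = Tfun (k + 3 * n) (r + a) (c' + b) := by
    intro n
    induction n with
    | zero => exact ⟨c, hc, hyk⟩
    | succ n ih =>
      obtain ⟨c', hc', hyc'⟩ := ih
      have hk : 2 ^ k ≤ 2 ^ (k + 3 * n) := Nat.pow_le_pow_right two_pos (by omega)
      have h8 : 2 ^ (k + 3 * (n + 1)) = 8 * 2 ^ (k + 3 * n) := by ring
      exact ⟨c' + 3 * 2 ^ (k + 3 * n), by omega, shift (k + 3 * n) c' (by omega) hc' hyc'⟩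
  obtain ⟨c', hc', hyc'⟩ := persist s
  have hs : s < 2 ^ (k + 3 * s) :=
    Nat.lt_two_pow_self.trans_le (Nat.pow_le_pow_right two_pos (by omega))
  have hk : 2 ^ k ≤ 2 ^ (k + 3 * s) := Nat.pow_le_pow_right two_pos (by omega)
  have h8 : 2 ^ (k + 3 * s + 3) = 8 * 2 ^ (k + 3 * s) := by ring
  exact ⟨k + 3 * s + 3, r, c' + 3 * 2 ^ (k + 3 * s), by omega, by omega,
    shift (k + 3 * s) c' (by omega) hc' hyc'⟩

theorem restrict_mem_PT {h w m n : ℕ} (hh : h ≤ m) (hw : w ≤ n) {x : Pat A16 m n}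
    (hx : x ∈ PT m n) : (fun a b => x (Fin.castLE hh a) (Fin.castLE hw b)) ∈ PT h w := by
  obtain ⟨k, r, c, hr, hc, hxk⟩ := mem_PT_iff.1 hx
  exact mem_PT_iff.2 ⟨k, r, c, by omega, by omega, fun a b => hxk _ _⟩

theorem exists_extension_mem_PT {h w m n : ℕ} (hh : h ≤ m) (hw : w ≤ n) {y : Pat A16 h w}
    (hy : y ∈ PT h w) :
    ∃ x ∈ PT m n, ∀ a b, y a b = x (Fin.castLE hh a) (Fin.castLE hw b) := by
  obtain ⟨k, r, c, hr, hc, hyk⟩ := exists_occurrence_with_margin hy (m + n)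
  exact ⟨fun a b => Tfun k (r + a) (c + b),
    mem_PT_iff.2 ⟨k, r, c, by omega, by omega, fun _ _ => rfl⟩, hyk⟩

def Pat.extend {α : Type} [Inhabited α] {h w : ℕ} (y : Pat α h w) (s t : ℕ) : α :=
  if hs : s < h then if ht : t < w then y ⟨s, hs⟩ ⟨t, ht⟩ else default else default

theorem Pat.extend_apply {α : Type} [Inhabited α] {h w : ℕ} (y : Pat α h w) {s t : ℕ}
    (hs : s < h) (ht : t < w) : y.extend s t = y ⟨s, hs⟩ ⟨t, ht⟩ := by
  simp [Pat.extend, hs, ht]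

theorem admissible_extend {h w : ℕ} {y : Pat A16 h w} (hy : y ∈ PT h w) :
    Admissible y.extend h w := by
  obtain ⟨k, r, c, hr, hc, hyk⟩ := mem_PT_iff.1 hy
  have hT := admissible_Tfun k
  have hext {s t : ℕ} (hs : s < h) (ht : t < w) : y.extend s t = Tfun k (r + s) (c + t) :=
    (y.extend_apply hs ht).trans (hyk _ _)
  constructor
  · intro s t hs ht
    rw [hext hs (by omega), hext hs ht]
    exact hT.right (r + s) (c + t) (by omega) (by omega)
  · intro s t hs ht
    rw [hext hs ht, hext (by omega) ht]
    exact hT.lower (r + s) (c + t) (by omega) (by omega)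

def window {α : Type} (X : ℕ → ℕ → α) (r c m n : ℕ) : Pat α m n :=
  fun a b => X (r + a) (c + b)

theorem window_eq_window_iff {α : Type} {X X' : ℕ → ℕ → α} {r c m n : ℕ} :
    window X r c m n = window X' r c m n ↔ EqOnBox X X' r (r + m) c (c + n) := by
  constructor
  · intro H r' c' h₀ h₁ h₂ h₃
    have := congrFun₂ H ⟨r' - r, by omega⟩ ⟨c' - c, by omega⟩
    simp only [window] at this
    rwa [Nat.add_sub_cancel' h₀, Nat.add_sub_cancel' h₂] at this
  · intro H
    funext a b
    exact H _ _ (by omega) (by omega) (by omega) (by omega)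

theorem muPatE_eq_muArr_extend {m n h w : ℕ} (hh : h ≤ m) (hw : w ≤ n) {x : Pat A16 m n}
    {y : Pat A16 h w} (hxy : ∀ a b, y a b = x (Fin.castLE hh a) (Fin.castLE hw b)) {r c : ℕ}
    (hr : r < 2 * h) (hc : c < 2 * w) : muPatE x r c = muArr y.extend r c := by
  rw [muPatE, dif_pos (by omega), dif_pos (by omega), muArr,
    Pat.extend_apply y (by omega : r / 2 < h) (by omega : c / 2 < w), hxy]
  congr 3 <;> exact Nat.mod_eq_of_lt (by omega)

theorem Pij_eq_image {i j m n h w : ℕ} (hi : 1 ≤ i) (hj : 1 ≤ j) (hih : i + m ≤ 2 * h + 1)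
    (hjw : j + n ≤ 2 * w + 1) (hh : h ≤ m) (hw : w ≤ n) :
    Pij i j m n =
      (fun y : Pat A16 h w => window (muArr y.extend) (i - 1) (j - 1) m n) '' PT h w := by
  ext q
  constructor
  · rintro ⟨x, hx, hq⟩
    refine ⟨_, restrict_mem_PT hh hw hx, funext₂ fun a b => ?_⟩
    rw [hq a b]
    exact (muPatE_eq_muArr_extend hh hw (fun _ _ => rfl) (by omega) (by omega)).symm
  · rintro ⟨y, hy, rfl⟩
    obtain ⟨x, hx, hxy⟩ := exists_extension_mem_PT hh hw hy
    exact ⟨x, hx, fun a b => (muPatE_eq_muArr_extend hh hw hxy (by omega) (by omega)).symm⟩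

theorem card_image_eq_card_image_of_iff {α β γ : Type*} {f : α → β} {g : α → γ} {s : Set α}
    (H : ∀ x ∈ s, ∀ y ∈ s, f x = f y ↔ g x = g y) : Nat.card (f '' s) = Nat.card (g '' s) := by
  rw [Set.image_eq_range, Set.image_eq_range]
  exact Nat.card_congr <| (Setoid.quotientKerEquivRange _).symm.trans <|
    (Quotient.congrRight (r := Setoid.ker fun x : s => f x) (r' := Setoid.ker fun x : s => g x)
      fun x y => H x x.2 y y.2).trans (Setoid.quotientKerEquivRange _)

theorem card_Pij_add_col {i j m n : ℕ} (hi : 1 ≤ i) (hi₂ : i ≤ 2) (hj : 1 ≤ j) (hj₂ : j ≤ 2)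
    (hm : 4 ≤ m) (hn : 4 ≤ n) (hjn : (j + n) % 2 = 0) :
    Nat.card (Pij i j m (n + 1)) = Nat.card (Pij i j m n) := by
  obtain ⟨t, ht⟩ : ∃ t, j - 1 + n = 2 * t + 1 := ⟨(j + n) / 2 - 1, by omega⟩
  rw [Pij_eq_image (h := (i + m) / 2) (w := t + 1) hi hj (by omega) (by omega) (by omega)
      (by omega),
    Pij_eq_image (h := (i + m) / 2) (w := t + 1) hi hj (by omega) (by omega) (by omega)
      (by omega)]
  refine card_image_eq_card_image_of_iff fun y hy y' hy' => ?_
  rw [window_eq_window_iff, window_eq_window_iff, ← add_assoc, ht]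
  exact ⟨fun H => H.mono le_rfl le_rfl le_rfl (by omega), fun H =>
    H.muArr_add_col (admissible_extend hy) (admissible_extend hy') (by omega) (by omega)
      (by omega) (by omega) (by omega)⟩

theorem card_Pij_add_row {j m n : ℕ} (hj : 1 ≤ j) (hj₂ : j ≤ 2) (hm : 4 ≤ m) (hn : 4 ≤ n) :
    Nat.card (Pij 1 j (m + 1) n) = Nat.card (Pij 2 j m n) := by
  rw [Pij_eq_image (h := (m + 2) / 2) (w := (j + n) / 2) le_rfl hj (by omega) (by omega)
      (by omega) (by omega),
    Pij_eq_image (h := (m + 2) / 2) (w := (j + n) / 2) one_le_two hj (by omega) (by omega)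
      (by omega) (by omega)]
  refine card_image_eq_card_image_of_iff fun y hy y' hy' => ?_
  rw [window_eq_window_iff, window_eq_window_iff, show 1 - 1 + (m + 1) = m + 1 by omega,
    show 2 - 1 + m = m + 1 by omega]
  exact ⟨fun H => H.mono (by omega) le_rfl le_rfl le_rfl, fun H =>
    H.muArr_add_row (admissible_extend hy) (admissible_extend hy') (by omega) (by omega)
      (by omega) (by omega) (by omega)⟩

section Counts

variable {i j m : ℕ}

theorem aT_eq_bT (hi : 1 ≤ i := by omega) (hi₂ : i ≤ 2 := by omega) (hj : 1 ≤ j := by omega)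
    (hj₂ : j ≤ 2 := by omega) (hm : 4 ≤ m := by omega) (hjm : (j + m) % 2 = 0 := by omega) :
    aT i j m = bT i j m :=
  (card_Pij_add_col hi hi₂ hj hj₂ hm hm hjm).symm

theorem aT_succ_eq_cT (hi : 1 ≤ i := by omega) (hi₂ : i ≤ 2 := by omega)
    (hj : 1 ≤ j := by omega) (hj₂ : j ≤ 2 := by omega) (hm : 4 ≤ m := by omega)
    (hjm : (j + m) % 2 = 0 := by omega) : aT i j (m + 1) = cT i j m :=
  card_Pij_add_col (m := m + 1) hi hi₂ hj hj₂ (by omega) hm hjm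

theorem aT_two_eq_cT_one (hj : 1 ≤ j := by omega) (hj₂ : j ≤ 2 := by omega)
    (hm : 4 ≤ m := by omega) : aT 2 j m = cT 1 j m :=
  (card_Pij_add_row hj hj₂ hm hm).symm

theorem aT_one_succ_eq_bT_two (hj : 1 ≤ j := by omega) (hj₂ : j ≤ 2 := by omega)
    (hm : 4 ≤ m := by omega) : aT 1 j (m + 1) = bT 2 j m :=
  card_Pij_add_row hj hj₂ hm (by omega)

theorem aT_two_eq_aT_one_succ (hj : 1 ≤ j := by omega) (hj₂ : j ≤ 2 := by omega)
    (hm : 4 ≤ m := by omega) (hjm : (j + m) % 2 = 0 := by omega) : aT 2 j m = aT 1 j (m + 1) :=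
  Eq.trans aT_eq_bT (Eq.symm aT_one_succ_eq_bT_two)

end Counts

/-- Corollary 4.3: the equalities among a, b, c with arguments mod 4. -/
theorem abc_equalities_mod_four (n : ℕ) (hn : 1 ≤ n) :
    (aT 1 2 (4 * n) = bT 1 2 (4 * n)) ∧
    (aT 2 1 (4 * n) = cT 1 1 (4 * n)) ∧
    (aT 2 2 (4 * n) = aT 1 2 (4 * n + 1) ∧ aT 2 2 (4 * n) = cT 1 2 (4 * n) ∧
      aT 2 2 (4 * n) = bT 2 2 (4 * n)) ∧
    (aT 1 1 (4 * n + 1) = bT 1 1 (4 * n + 1) ∧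
      aT 1 1 (4 * n + 1) = bT 2 1 (4 * n)) ∧
    (aT 2 1 (4 * n + 1) = aT 1 1 (4 * n + 2) ∧
      aT 2 1 (4 * n + 1) = cT 1 1 (4 * n + 1) ∧
      aT 2 1 (4 * n + 1) = bT 2 1 (4 * n + 1)) ∧
    (aT 2 2 (4 * n + 1) = cT 1 2 (4 * n + 1) ∧
      aT 2 2 (4 * n + 1) = cT 2 2 (4 * n)) ∧
    (aT 1 2 (4 * n + 2) = bT 1 2 (4 * n + 2) ∧
      aT 1 2 (4 * n + 2) = bT 2 2 (4 * n + 1)) ∧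
    (aT 2 1 (4 * n + 2) = cT 1 1 (4 * n + 2) ∧
      aT 2 1 (4 * n + 2) = cT 2 1 (4 * n + 1)) ∧
    (aT 2 2 (4 * n + 2) = aT 1 2 (4 * n + 3) ∧
      aT 2 2 (4 * n + 2) = cT 1 2 (4 * n + 2) ∧
      aT 2 2 (4 * n + 2) = bT 2 2 (4 * n + 2)) ∧
    (aT 1 1 (4 * n + 3) = bT 1 1 (4 * n + 3) ∧
      aT 1 1 (4 * n + 3) = bT 2 1 (4 * n + 2)) ∧
    (aT 2 1 (4 * n + 3) = cT 1 1 (4 * n + 3) ∧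
      aT 2 1 (4 * n + 3) = bT 2 1 (4 * n + 3)) ∧
    (aT 2 2 (4 * n + 3) = cT 1 2 (4 * n + 3) ∧
      aT 2 2 (4 * n + 3) = cT 2 2 (4 * n + 2)) :=
  ⟨aT_eq_bT,
    aT_two_eq_cT_one,
    ⟨aT_two_eq_aT_one_succ, aT_two_eq_cT_one, aT_eq_bT⟩,
    ⟨aT_eq_bT, aT_one_succ_eq_bT_two⟩,
    ⟨aT_two_eq_aT_one_succ, aT_two_eq_cT_one, aT_eq_bT⟩,
    ⟨aT_two_eq_cT_one, aT_succ_eq_cT⟩,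
    ⟨aT_eq_bT, aT_one_succ_eq_bT_two⟩,
    ⟨aT_two_eq_cT_one, aT_succ_eq_cT⟩,
    ⟨aT_two_eq_aT_one_succ, aT_two_eq_cT_one, aT_eq_bT⟩,
    ⟨aT_eq_bT, aT_one_succ_eq_bT_two⟩,
    ⟨aT_two_eq_cT_one, aT_eq_bT⟩,
    ⟨aT_two_eq_cT_one, aT_succ_eq_cT⟩⟩
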